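/- In a unital category, given morphisms f : X → A, g : Y → A, f' : X → A', g' : Y → A', the pairings ⟨f, f'⟩ : X → A × A' and ⟨g, g'⟩ : Y → A × A' Huq-commute if and only if f and g Huq-commute and f' and g' Huq-commute. -/

import Mathlib

open CategoryTheory CategoryTheory.Limits

universe v u

noncomputable section

variable {C : Type u} [Category.{v} C]

/-- A pair of morphisms with common codomain is jointly strongly epimorphic:
it has the lifting property against all monomorphisms. -/
def JointlyStrongEpi {X Y Z : C} (f : X ⟶ Z) (g : Y ⟶ Z) : Prop :=
  ∀ {U V : C} (m : U ⟶ V) (_ : Mono m) (h : Z ⟶ V) (u : X ⟶ U) (v : Y ⟶ U),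
    u ≫ m = f ≫ h → v ≫ m = g ≫ h → ∃ t : Z ⟶ U, t ≫ m = h

variable (C) in
/-- A unital category: pointed, finitely complete, and the product inclusions
`⟨1,0⟩ : X → X × Y` and `⟨0,1⟩ : Y → X × Y` are jointly strongly epimorphic. -/
class Unital [HasZeroObject C] [HasZeroMorphisms C] [HasFiniteLimits C] : Prop where
  jse : ∀ X Y : C, JointlyStrongEpi (prod.lift (𝟙 X) (0 : X ⟶ Y)) (prod.lift (0 : Y ⟶ X) (𝟙 Y))

/-- `f : X ⟶ A` and `g : Y ⟶ A` Huq-commute: there is a cooperator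
`φ : X × Y ⟶ A` with `φ∘⟨1,0⟩ = f` and `φ∘⟨0,1⟩ = g`. -/
def HuqCommute [HasZeroMorphisms C] [HasFiniteLimits C] {X Y A : C} (f : X ⟶ A) (g : Y ⟶ A) : Prop :=
  ∃ φ : X ⨯ Y ⟶ A, prod.lift (𝟙 X) 0 ≫ φ = f ∧ prod.lift 0 (𝟙 Y) ≫ φ = g

section HuqCommute

variable [HasZeroMorphisms C] [HasFiniteLimits C] {X Y A A' : C}

theorem HuqCommute.comp {f : X ⟶ A} {g : Y ⟶ A} (h : HuqCommute f g) (k : A ⟶ A') :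
    HuqCommute (f ≫ k) (g ≫ k) := by
  obtain ⟨φ, hf, hg⟩ := h
  exact ⟨φ ≫ k, by rw [← hf, Category.assoc], by rw [← hg, Category.assoc]⟩

theorem HuqCommute.prod_lift {f : X ⟶ A} {g : Y ⟶ A} {f' : X ⟶ A'} {g' : Y ⟶ A'}
    (h : HuqCommute f g) (h' : HuqCommute f' g') :
    HuqCommute (prod.lift f f') (prod.lift g g') := by
  obtain ⟨φ, hf, hg⟩ := h
  obtain ⟨φ', hf', hg'⟩ := h'
  exact ⟨prod.lift φ φ', by simp [hf, hf'], by simp [hg, hg']⟩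

end HuqCommute

theorem stmt4 [HasZeroMorphisms C] [HasFiniteLimits C]
    {X Y A A' : C} (f : X ⟶ A) (g : Y ⟶ A) (f' : X ⟶ A') (g' : Y ⟶ A') :
    HuqCommute (prod.lift f f') (prod.lift g g') ↔ (HuqCommute f g ∧ HuqCommute f' g') :=
  ⟨fun h =>
    ⟨prod.lift_fst f f' ▸ prod.lift_fst g g' ▸ h.comp prod.fst,
      prod.lift_snd f f' ▸ prod.lift_snd g g' ▸ h.comp prod.snd⟩,
    fun ⟨h, h'⟩ => h.prod_lift h'⟩
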